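/- arXiv:1210.5325 — 3 statements merged into one kernel-verified Lean document; each statement's English description precedes it below -/
import Mathlib

section
/- Let G and H be additive commutative groups, ψ: G → H a surjective group homomorphism, R a G-graded commutative ring, and M a G-graded R-module. If the ψ-coarsening M_[ψ] is an injective object of GrMod^H(R_[ψ]), then M is an injective object of GrMod^G(R). -/
/-!
Common vocabulary: internally graded rings and modules, coarsening of gradings,
graded morphisms, and derived notions (injectivity, cogenerators, smallness, ...),
following Rohrer, "Coarsenings, injectives and Hom functors".
-/

open DirectSum

section Defs

variable {G H R : Type} [AddCommGroup G] [AddCommGroup H] [CommRing R]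

/-- The `ψ`-coarsening of a `G`-grading: `(ℳ_[ψ])_h = ⨁_{g ∈ ψ⁻¹(h)} ℳ_g`. -/
def coarsen {M : Type} [AddCommGroup M] (ψ : G →+ H) (ℳ : G → AddSubgroup M) (h : H) :
    AddSubgroup M :=
  ⨆ g ∈ ψ ⁻¹' {h}, ℳ g

/-- `(R, 𝒜)` is a `G`-graded commutative ring: the `𝒜 g` are additive subgroups whose
internal direct sum is `R`, and `𝒜 g * 𝒜 h ⊆ 𝒜 (g + h)`. -/
def IsGradedRing (𝒜 : G → AddSubgroup R) : Prop :=
  (1 : R) ∈ 𝒜 0 ∧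
  (∀ {g h : G} {a b : R}, a ∈ 𝒜 g → b ∈ 𝒜 h → a * b ∈ 𝒜 (g + h)) ∧
  (letI := Classical.decEq G; DirectSum.IsInternal 𝒜)

/-- `(M, ℳ)` is a `G`-graded module over the `G`-graded ring `(R, 𝒜)`. -/
def IsGradedModule {M : Type} [AddCommGroup M] [Module R M]
    (𝒜 : G → AddSubgroup R) (ℳ : G → AddSubgroup M) : Prop :=
  (∀ {g h : G} {r : R} {m : M}, r ∈ 𝒜 g → m ∈ ℳ h → r • m ∈ ℳ (g + h)) ∧
  (letI := Classical.decEq G; DirectSum.IsInternal ℳ)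

/-- A morphism of `G`-graded `R`-modules is an `R`-linear map respecting the gradings. -/
def IsGradedHom {M N : Type} [AddCommGroup M] [Module R M]
    [AddCommGroup N] [Module R N] (ℳ : G → AddSubgroup M) (𝒩 : G → AddSubgroup N)
    (f : M →ₗ[R] N) : Prop :=
  ∀ g : G, ∀ m ∈ ℳ g, f m ∈ 𝒩 g

/-- The grading of a direct sum of graded modules:
`(⨁_i N_i)_g` consists of the elements all of whose components lie in degree `g`. -/
def directSumGrading {ι : Type} {M : ι → Type}
    [∀ i, AddCommGroup (M i)] (ℳ : ∀ i, G → AddSubgroup (M i)) (g : G) :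
    AddSubgroup (⨁ i, M i) where
  carrier := {x | ∀ i, x i ∈ ℳ i g}
  zero_mem' := fun i => by simp only [DirectSum.zero_apply, ZeroMemClass.zero_mem]
  add_mem' := fun {x y} hx hy i => by
    rw [DirectSum.add_apply]; exact add_mem (hx i) (hy i)
  neg_mem' := fun {x} hx i => by
    rw [DFinsupp.neg_apply]; exact neg_mem (hx i)

/-- `(E, ℰ)` is an injective object of the category of `G`-graded `R`-modules:
every graded morphism into `E` extends along every injective graded morphism. -/
def IsInjectiveGradedModule (𝒜 : G → AddSubgroup R) {E : Type} [AddCommGroup E] [Module R E]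
    (ℰ : G → AddSubgroup E) : Prop :=
  ∀ (A B : Type) [AddCommGroup A] [Module R A] [AddCommGroup B] [Module R B],
    ∀ (𝒮A : G → AddSubgroup A) (𝒮B : G → AddSubgroup B),
      IsGradedModule 𝒜 𝒮A → IsGradedModule 𝒜 𝒮B →
      ∀ i : A →ₗ[R] B, Function.Injective i → IsGradedHom 𝒮A 𝒮B i →
      ∀ f : A →ₗ[R] E, IsGradedHom 𝒮A ℰ f →
      ∃ g : B →ₗ[R] E, IsGradedHom 𝒮B ℰ g ∧ g ∘ₗ i = f

/-- `(M, ℳ)` is a cogenerator of the category of `G`-graded `R`-modules: every nonzero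
graded morphism is detected by a graded morphism into `M`. -/
def IsCogenerator (𝒜 : G → AddSubgroup R) {M : Type} [AddCommGroup M] [Module R M]
    (ℳ : G → AddSubgroup M) : Prop :=
  ∀ (N N' : Type) [AddCommGroup N] [Module R N] [AddCommGroup N'] [Module R N'],
    ∀ (𝒩 : G → AddSubgroup N) (𝒩' : G → AddSubgroup N'),
      IsGradedModule 𝒜 𝒩 → IsGradedModule 𝒜 𝒩' →
      ∀ u : N →ₗ[R] N', IsGradedHom 𝒩 𝒩' u → u ≠ 0 →
      ∃ v : N' →ₗ[R] M, IsGradedHom 𝒩' ℳ v ∧ v ∘ₗ u ≠ 0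

/-- `M` is a small graded module: every graded morphism from `M` into a direct sum of
graded modules factors through a finite sub-sum. -/
def IsSmall (𝒜 : G → AddSubgroup R) {M : Type} [AddCommGroup M] [Module R M]
    (ℳ : G → AddSubgroup M) : Prop :=
  ∀ (ι : Type) (N : ι → Type) [∀ i, AddCommGroup (N i)] [∀ i, Module R (N i)],
    ∀ (𝒩 : ∀ i, G → AddSubgroup (N i)), (∀ i, IsGradedModule 𝒜 (𝒩 i)) →
      ∀ f : M →ₗ[R] ⨁ i, N i, IsGradedHom ℳ (directSumGrading 𝒩) f →
        ∃ s : Finset ι, ∀ (m : M) (i : ι), i ∉ s → f m i = 0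

/-- `M` is `P`-small: every graded morphism from `M` into a direct sum of copies of `P`
factors through a finite sub-sum. -/
def IsSmallWrt {P : Type} [AddCommGroup P] [Module R P] (𝒬 : G → AddSubgroup P)
    {M : Type} [AddCommGroup M] [Module R M] (ℳ : G → AddSubgroup M) : Prop :=
  ∀ (ι : Type) (f : M →ₗ[R] ⨁ (_ : ι), P),
    IsGradedHom ℳ (directSumGrading fun (_ : ι) => 𝒬) f →
      ∃ s : Finset ι, ∀ (m : M) (i : ι), i ∉ s → f m i = 0

/-- A `G`-graded ring is steady if all small graded modules over it are finitely generated. -/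
def IsSteady (𝒜 : G → AddSubgroup R) : Prop :=
  ∀ (M : Type) [AddCommGroup M] [Module R M], ∀ ℳ : G → AddSubgroup M,
    IsGradedModule 𝒜 ℳ → IsSmall 𝒜 ℳ → Module.Finite R M

/-- A graded ideal of the `G`-graded ring `(R, 𝒜)`: `I = ⨁_g (I ∩ R_g)`. -/
def IsGradedIdeal (𝒜 : G → AddSubgroup R) (I : Ideal R) : Prop :=
  I.toAddSubgroup = ⨆ g : G, I.toAddSubgroup ⊓ 𝒜 g

/-- A simple `G`-graded `R`-module: nonzero, and its only graded submodules are `0` and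
the whole module. -/
def IsSimpleGradedModule (𝒜 : G → AddSubgroup R) {S : Type} [AddCommGroup S] [Module R S]
    (𝒮 : G → AddSubgroup S) : Prop :=
  IsGradedModule 𝒜 𝒮 ∧ Nontrivial S ∧
    ∀ P : Submodule R S, (P.toAddSubgroup = ⨆ g : G, P.toAddSubgroup ⊓ 𝒮 g) →
      P = ⊥ ∨ P = ⊤

/-- The subgroup of `M →ₗ[R] N` consisting of the graded morphisms `M → N(g)`, i.e. the
degree-`g` component of the graded Hom module `⨁HOM(M, N)`. -/
def gradedHomSubgroup {M N : Type} [AddCommGroup M] [Module R M] [AddCommGroup N] [Module R N]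
    (ℳ : G → AddSubgroup M) (𝒩 : G → AddSubgroup N) (g : G) : AddSubgroup (M →ₗ[R] N) where
  carrier := {u | ∀ g' : G, ∀ m ∈ ℳ g', u m ∈ 𝒩 (g + g')}
  zero_mem' := fun g' m _ => by simp only [LinearMap.zero_apply, ZeroMemClass.zero_mem]
  add_mem' := fun {u v} hu hv g' m hm => by
    rw [LinearMap.add_apply]; exact add_mem (hu g' m hm) (hv g' m hm)
  neg_mem' := fun {u} hu g' m hm => by
    rw [LinearMap.neg_apply]; exact neg_mem (hu g' m hm)

end Defs

/-!
Coarsening turns a `G`-graded extension problem `A ↪ B`, `f : A → M` into an `H`-graded one, so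
injectivity of `M_[ψ]` yields an `R`-linear `g : B → M` extending `f`, graded only for the coarser
grading. Its degree-zero part, sending `b ∈ B_γ` to the degree-`γ` component of `g b`, is
`G`-graded; it is still `R`-linear because `(r • m)_{δ + γ} = r • m_γ` for `r ∈ R_δ`, and it still
extends `f` because `f` is graded.
-/

section Lattice

variable {α ι κ : Type*} [CompleteLattice α]

theorem biSup_biSup_fiber (f : ι → α) (p : ι → κ) (s : Set κ) :
    ⨆ k ∈ s, ⨆ i ∈ p ⁻¹' {k}, f i = ⨆ i ∈ p ⁻¹' s, f i := by
  refine le_antisymm (iSup₂_le fun k hk => iSup₂_le fun i hi => ?_) (iSup₂_le fun i hi => ?_)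
  · exact le_biSup f (show p i ∈ s from (Set.mem_singleton_iff.mp hi) ▸ hk)
  · exact le_iSup₂_of_le (p i) hi (le_biSup f rfl)

theorem iSup_biSup_fiber (f : ι → α) (p : ι → κ) : ⨆ k, ⨆ i ∈ p ⁻¹' {k}, f i = ⨆ i, f i := by
  simpa using biSup_biSup_fiber f p Set.univ

theorem iSupIndep.biSup_fiber [IsModularLattice α] [IsCompactlyGenerated α] {f : ι → α}
    (hf : iSupIndep f) (p : ι → κ) : iSupIndep fun k => ⨆ i ∈ p ⁻¹' {k}, f i := fun k => by
  have hcompl := biSup_biSup_fiber f p {k}ᶜ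
  simp only [Set.mem_compl_iff, Set.mem_singleton_iff] at hcompl
  rw [hcompl]
  exact hf.disjoint_biSup_biSup disjoint_compl_right

end Lattice

theorem DirectSum.IsInternal.addSubgroup_iSup_eq_top {ι N : Type} [DecidableEq ι]
    [AddCommGroup N] {𝒩 : ι → AddSubgroup N} (h : IsInternal 𝒩) : iSup 𝒩 = ⊤ := by
  have h' : IsInternal fun i => (𝒩 i).toIntSubmodule := h
  apply AddSubgroup.toIntSubmodule.injective
  simpa [OrderIso.map_iSup] using h'.submodule_iSup_eq_top

section Coarsen

variable {G H M : Type} [AddCommGroup G] [AddCommGroup H] [AddCommGroup M] (ψ : G →+ H)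

theorem toIntSubmodule_coarsen (ℳ : G → AddSubgroup M) (h : H) :
    (coarsen ψ ℳ h).toIntSubmodule = ⨆ g ∈ ψ ⁻¹' {h}, (ℳ g).toIntSubmodule := by
  simp only [coarsen, OrderIso.map_iSup]

/- Independence is checked on `ℤ`-submodules: their lattice is compactly generated, as
`iSupIndep.biSup_fiber` requires. -/
theorem isInternal_coarsen [DecidableEq G] [DecidableEq H] {ℳ : G → AddSubgroup M}
    (hℳ : IsInternal ℳ) : IsInternal (coarsen ψ ℳ) := by
  change IsInternal fun h => (coarsen ψ ℳ h).toIntSubmodule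
  change IsInternal fun g => (ℳ g).toIntSubmodule at hℳ
  rw [isInternal_submodule_iff_iSupIndep_and_iSup_eq_top] at hℳ ⊢
  simp only [toIntSubmodule_coarsen]
  exact ⟨hℳ.1.biSup_fiber ψ, (iSup_biSup_fiber _ ψ).trans hℳ.2⟩

theorem le_coarsen (ℳ : G → AddSubgroup M) (g : G) : ℳ g ≤ coarsen ψ ℳ (ψ g) :=
  le_biSup ℳ rfl

@[elab_as_elim]
theorem coarsen_induction {ℳ : G → AddSubgroup M} {h : H} {motive : M → Prop}
    (mem : ∀ g, ψ g = h → ∀ x ∈ ℳ g, motive x) (zero : motive 0)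
    (add : ∀ x y, motive x → motive y → motive (x + y)) {m : M} (hm : m ∈ coarsen ψ ℳ h) :
    motive m := by
  rw [coarsen, ← iSup_subtype''] at hm
  exact AddSubgroup.iSup_induction (C := motive) _ hm (fun g => mem g g.2) zero add

theorem isGradedHom_coarsen {R N : Type} [CommRing R] [Module R M] [AddCommGroup N] [Module R N]
    {ℳ : G → AddSubgroup M} {𝒩 : G → AddSubgroup N} {u : M →ₗ[R] N} (hu : IsGradedHom ℳ 𝒩 u) :
    IsGradedHom (coarsen ψ ℳ) (coarsen ψ 𝒩) u := by
  intro h m hm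
  refine coarsen_induction ψ (motive := fun m => u m ∈ coarsen ψ 𝒩 h)
    (fun g hg x hx => ?_) (by simp) (fun x y hx hy => by simpa using add_mem hx hy) hm
  exact hg ▸ le_coarsen ψ 𝒩 g (hu g x hx)

theorem smul_mem_coarsen {R : Type} [Ring R] [Module R M] {𝒜 : G → AddSubgroup R}
    {ℳ : G → AddSubgroup M}
    (hℳ : ∀ {g g' : G} {r : R} {m : M}, r ∈ 𝒜 g → m ∈ ℳ g' → r • m ∈ ℳ (g + g'))
    {h h' : H} {r : R} {m : M} (hr : r ∈ coarsen ψ 𝒜 h) (hm : m ∈ coarsen ψ ℳ h') :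
    r • m ∈ coarsen ψ ℳ (h + h') := by
  refine coarsen_induction ψ (motive := fun r => r • m ∈ coarsen ψ ℳ (h + h'))
    (fun g hg a ha => ?_) (by simp) (fun a b ha hb => by simpa [add_smul] using add_mem ha hb) hr
  refine coarsen_induction ψ (motive := fun m => a • m ∈ coarsen ψ ℳ (h + h'))
    (fun g' hg' x hx => ?_) (by simp) (fun x y hx hy => by simpa using add_mem hx hy) hm
  have hax := le_coarsen ψ ℳ _ (hℳ ha hx)
  rwa [map_add, hg, hg'] at hax

theorem isGradedModule_coarsen {R : Type} [CommRing R] [Module R M] {𝒜 : G → AddSubgroup R}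
    {ℳ : G → AddSubgroup M} (hℳ : IsGradedModule 𝒜 ℳ) :
    IsGradedModule (coarsen ψ 𝒜) (coarsen ψ ℳ) := by
  classical
  exact ⟨smul_mem_coarsen ψ hℳ.1, isInternal_coarsen ψ hℳ.2⟩

end Coarsen

section GradedPart

variable {G R A B M : Type} [DecidableEq G] [CommRing R]
  [AddCommGroup A] [Module R A] [AddCommGroup B] [Module R B] [AddCommGroup M] [Module R M]
  (ℬ : G → AddSubgroup B) (ℳ : G → AddSubgroup M) [Decomposition ℬ] [Decomposition ℳ]

/-- The degree-zero component of `u` in the graded `Hom(B, M)`: it sends `b ∈ B_γ` to the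
degree-`γ` component of `u b`. -/
noncomputable def gradedPart (u : B →+ M) : B →+ M :=
  (toAddMonoid fun γ => (ℳ γ).subtype.comp <|
      (DFinsupp.evalAddMonoidHom γ).comp <| (decomposeAddEquiv ℳ).toAddMonoidHom.comp <|
        u.comp (ℬ γ).subtype).comp
    (decomposeAddEquiv ℬ).toAddMonoidHom

variable {ℬ ℳ}

theorem gradedPart_apply_of_mem (u : B →+ M) {γ : G} {b : B} (hb : b ∈ ℬ γ) :
    gradedPart ℬ ℳ u b = decompose ℳ (u b) γ := by
  simp only [gradedPart, AddMonoidHom.comp_apply, AddEquiv.toAddMonoidHom_eq_coe,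
    AddMonoidHom.coe_coe, decomposeAddEquiv_apply, decompose_of_mem ℬ hb, toAddMonoid_of]
  rfl

theorem gradedPart_mem (u : B →+ M) {γ : G} {b : B} (hb : b ∈ ℬ γ) :
    gradedPart ℬ ℳ u b ∈ ℳ γ := by
  rw [gradedPart_apply_of_mem u hb]
  exact (decompose ℳ (u b) γ).2

theorem gradedPart_apply_eq_self {u : B →+ M} {γ : G} {b : B} (hb : b ∈ ℬ γ)
    (hub : u b ∈ ℳ γ) : gradedPart ℬ ℳ u b = u b := by
  rw [gradedPart_apply_of_mem u hb, decompose_of_mem_same ℳ hub]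

theorem coe_decompose_smul_add_of_left_mem [AddCommGroup G] {𝒜 : G → AddSubgroup R}
    [SetLike.GradedSMul 𝒜 ℳ] {δ : G} {r : R} (hr : r ∈ 𝒜 δ) (m : M) (γ : G) :
    (decompose ℳ (r • m) (δ + γ) : M) = r • (decompose ℳ m γ : M) := by
  induction m using Decomposition.inductionOn ℳ with
  | zero => simp
  | add m m' hm hm' => simp [smul_add, hm, hm']
  | @homogeneous γ' m =>
    have hrm : r • (m : M) ∈ ℳ (δ + γ') := SetLike.GradedSMul.smul_mem hr m.2
    by_cases hγ : γ' = γ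
    · subst hγ
      rw [decompose_of_mem_same ℳ hrm, decompose_of_mem_same ℳ m.2]
    · rw [decompose_of_mem_ne ℳ hrm (by simpa using hγ), decompose_of_mem_ne ℳ m.2 hγ, smul_zero]

variable [AddCommGroup G] {𝒜 : G → AddSubgroup R} [SetLike.GradedSMul 𝒜 ℬ]
  [SetLike.GradedSMul 𝒜 ℳ]

theorem gradedPart_smul (h𝒜 : ⨆ g, 𝒜 g = ⊤) (u : B →ₗ[R] M) (r : R) (b : B) :
    gradedPart ℬ ℳ u (r • b) = r • gradedPart ℬ ℳ u b := by
  have hr : r ∈ ⨆ g, 𝒜 g := h𝒜 ▸ AddSubgroup.mem_top r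
  induction hr using AddSubgroup.iSup_induction' with
  | h1 => simp
  | hadd r r' _ _ hr hr' => simp [add_smul, hr, hr']
  | hp δ r hr =>
    induction b using Decomposition.inductionOn ℬ with
    | zero => simp
    | add b b' hb hb' => simp [smul_add, hb, hb']
    | @homogeneous γ b =>
      have hrb : r • (b : B) ∈ ℬ (δ + γ) := SetLike.GradedSMul.smul_mem hr b.2
      rw [gradedPart_apply_of_mem _ hrb, gradedPart_apply_of_mem _ b.2, AddMonoidHom.coe_coe,
        map_smul]
      exact coe_decompose_smul_add_of_left_mem hr _ γ

variable (ℬ ℳ) in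
noncomputable def gradedPartₗ (h𝒜 : ⨆ g, 𝒜 g = ⊤) (u : B →ₗ[R] M) : B →ₗ[R] M :=
  { gradedPart ℬ ℳ u with map_smul' := gradedPart_smul h𝒜 u }

theorem isGradedHom_gradedPartₗ (h𝒜 : ⨆ g, 𝒜 g = ⊤) (u : B →ₗ[R] M) :
    IsGradedHom ℬ ℳ (gradedPartₗ ℬ ℳ h𝒜 u) :=
  fun _ _ hb => gradedPart_mem (u : B →+ M) hb

theorem gradedPartₗ_comp_eq (h𝒜 : ⨆ g, 𝒜 g = ⊤) {𝒮 : G → AddSubgroup A} (h𝒮 : ⨆ g, 𝒮 g = ⊤)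
    {i : A →ₗ[R] B} {f : A →ₗ[R] M} (hi : IsGradedHom 𝒮 ℬ i) (hf : IsGradedHom 𝒮 ℳ f)
    {u : B →ₗ[R] M} (hu : u ∘ₗ i = f) : gradedPartₗ ℬ ℳ h𝒜 u ∘ₗ i = f := by
  ext a
  have ha : a ∈ ⨆ g, 𝒮 g := h𝒮 ▸ AddSubgroup.mem_top a
  induction ha using AddSubgroup.iSup_induction' with
  | h1 => simp
  | hadd a a' _ _ ha ha' => simp only [map_add, ha, ha']
  | hp γ a ha =>
    have hua : u (i a) = f a := LinearMap.congr_fun hu a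
    exact (gradedPart_apply_eq_self (hi γ a ha) (hua ▸ hf γ a ha)).trans hua

end GradedPart

theorem injective_of_coarsening_injective_general
    {G H R M : Type} [AddCommGroup G] [AddCommGroup H] [CommRing R]
    [AddCommGroup M] [Module R M]
    (ψ : G →+ H)
    (𝒜 : G → AddSubgroup R) (h𝒜 : IsGradedRing 𝒜)
    (ℳ : G → AddSubgroup M) (hℳ : IsGradedModule 𝒜 ℳ)
    (hinj : IsInjectiveGradedModule (coarsen ψ 𝒜) (coarsen ψ ℳ)) :
    IsInjectiveGradedModule 𝒜 ℳ := by
  intro A B _ _ _ _ 𝒮A 𝒮B hA hB i hi hi_gr f hf_gr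
  obtain ⟨g, -, hg⟩ := hinj A B _ _ (isGradedModule_coarsen ψ hA) (isGradedModule_coarsen ψ hB)
    i hi (isGradedHom_coarsen ψ hi_gr) f (isGradedHom_coarsen ψ hf_gr)
  let := Classical.decEq G
  let := hB.2.chooseDecomposition
  let := hℳ.2.chooseDecomposition
  have : SetLike.GradedSMul 𝒜 𝒮B := ⟨fun _ _ _ _ => hB.1⟩
  have : SetLike.GradedSMul 𝒜 ℳ := ⟨fun _ _ _ _ => hℳ.1⟩
  have h𝒜_top := h𝒜.2.2.addSubgroup_iSup_eq_top
  exact ⟨gradedPartₗ 𝒮B ℳ h𝒜_top g, isGradedHom_gradedPartₗ h𝒜_top g,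
    gradedPartₗ_comp_eq h𝒜_top hA.2.addSubgroup_iSup_eq_top hi_gr hf_gr hg⟩

/-- **Statement 5** (Proposition 1.78): if the `ψ`-coarsening `M_[ψ]` is an injective
`H`-graded `R_[ψ]`-module, then `M` is an injective `G`-graded `R`-module. -/
theorem injective_of_coarsening_injective
    {G H R M : Type} [AddCommGroup G] [AddCommGroup H] [CommRing R]
    [AddCommGroup M] [Module R M]
    (ψ : G →+ H) (hψ : Function.Surjective ψ)
    (𝒜 : G → AddSubgroup R) (h𝒜 : IsGradedRing 𝒜)
    (ℳ : G → AddSubgroup M) (hℳ : IsGradedModule 𝒜 ℳ)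
    (hinj : IsInjectiveGradedModule (coarsen ψ 𝒜) (coarsen ψ ℳ)) :
    IsInjectiveGradedModule 𝒜 ℳ :=
  injective_of_coarsening_injective_general ψ 𝒜 h𝒜 ℳ hℳ hinj
end

section
/- Let G and H be additive commutative groups, ψ: G → H a surjective group homomorphism, R a G-graded commutative ring, and M a G-graded R-module. Then M is small in GrMod^G(R) if and only if the ψ-coarsening M_[ψ] is small in GrMod^H(R_[ψ]). -/
/-!
Common vocabulary: internally graded rings and modules, coarsening of gradings,
graded morphisms, and derived notions (injectivity, cogenerators, smallness, ...),
following Rohrer, "Coarsenings, injectives and Hom functors".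
-/

open DirectSum

/-!
Smallness does not see the grading. If the homogeneous elements span `R`, a graded `R`-module
`M` is small if and only if every increasing chain `U₀ ≤ U₁ ≤ ⋯` of (ungraded) submodules with
union `M` reaches `M`. If a graded map `f : M → ⨁ᵢ Nᵢ` hits infinitely many summands `i₀, i₁, …`,
the submodules `{m | f m iₖ = 0 for all k ≥ n}` form such a chain that never reaches `M`.
Conversely, if `(Uₙ)` never reaches `M`, the submodules `Wₙ ≤ Uₙ` generated by the homogeneous
elements of `Uₙ` are graded and still cover `M`, so `m ↦ (m mod Wₙ)ₙ` is a graded map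
`M → ⨁ₙ M ⧸ Wₙ` hitting infinitely many summands. Since `M_[ψ]` is a graded `R_[ψ]`-module with the
same underlying module, both sides of the theorem are equivalent to this chain condition.
-/

namespace DirectSum

variable {ι M : Type*} [DecidableEq ι] [AddCommGroup M] {A : ι → AddSubgroup M}

theorem IsInternal.addSubgroup_iSup_eq_top_s6 (h : IsInternal A) : ⨆ i, A i = ⊤ := by
  refine eq_top_iff.2 fun m _ => ?_
  obtain ⟨x, rfl⟩ := h.2 m
  induction x using DirectSum.induction_on with
  | zero => exact zero_mem _
  | of i y => simpa using AddSubgroup.mem_iSup_of_mem i y.2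
  | add x y hx hy => rw [map_add]; exact add_mem (hx trivial) (hy trivial)

theorem isInternal_addSubgroup_of_iSupIndep_of_iSup_eq_top (hind : iSupIndep A)
    (htop : ⨆ i, A i = ⊤) : IsInternal A := by
  refine ⟨hind.dfinsuppSumAddHom_injective, fun m => ?_⟩
  have hle : ⨆ i, A i ≤ (DirectSum.coeAddMonoidHom A).range :=
    iSup_le fun i x hx => ⟨of (fun i => A i) i ⟨x, hx⟩, DirectSum.coeAddMonoidHom_of _ _ _⟩
  exact hle (htop ▸ AddSubgroup.mem_top m)

end DirectSum

section Coarsen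

variable {G H M : Type} [AddCommGroup G] [AddCommGroup H] [AddCommGroup M] (ψ : G →+ H)

theorem mem_coarsen_of_mem {ℳ : G → AddSubgroup M} {g : G} {h : H} {m : M} (hm : m ∈ ℳ g)
    (hg : ψ g = h) : m ∈ coarsen ψ ℳ h :=
  hg ▸ le_coarsen ψ ℳ g hm

theorem coarsen_le_iff {ℳ : G → AddSubgroup M} {h : H} {K : AddSubgroup M} :
    coarsen ψ ℳ h ≤ K ↔ ∀ g, ψ g = h → ℳ g ≤ K :=
  iSup₂_le_iff

theorem iSup_coarsen (ℳ : G → AddSubgroup M) : ⨆ h, coarsen ψ ℳ h = ⨆ g, ℳ g :=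
  le_antisymm (iSup_le fun _ => (coarsen_le_iff ψ).2 fun g _ => le_iSup ℳ g)
    (iSup_le fun g => (le_coarsen ψ ℳ g).trans (le_iSup _ _))

theorem iSupIndep_coarsen {ℳ : G → AddSubgroup M} (hℳ : iSupIndep ℳ) :
    iSupIndep (coarsen ψ ℳ) := by
  let e := (AddSubgroup.toIntSubmodule : AddSubgroup M ≃o Submodule ℤ M)
  rw [← iSupIndep_map_orderIso_iff e] at hℳ ⊢
  intro h
  have he : ∀ h', e (coarsen ψ ℳ h') = ⨆ g ∈ ψ ⁻¹' {h'}, e (ℳ g) := fun h' => e.map_iSup₂ _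
  simp only [Function.comp_apply, he]
  refine (hℳ.disjoint_biSup_biSup (t := (ψ ⁻¹' {h})ᶜ) disjoint_compl_right).mono_right ?_
  exact iSup₂_le fun h' hh' => iSup₂_le fun g hg => le_biSup (fun g => e (ℳ g)) fun hgh => hh' (hg.symm.trans hgh)

theorem map₂_mem_coarsen {A B C : Type} [AddCommGroup A] [AddCommGroup B] [AddCommGroup C]
    (f : A →+ B →+ C) {𝒜 : G → AddSubgroup A} {ℬ : G → AddSubgroup B} {𝒞 : G → AddSubgroup C}
    (hf : ∀ {g g' : G} {a : A} {b : B}, a ∈ 𝒜 g → b ∈ ℬ g' → f a b ∈ 𝒞 (g + g'))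
    {h h' : H} {a : A} {b : B} (ha : a ∈ coarsen ψ 𝒜 h) (hb : b ∈ coarsen ψ ℬ h') :
    f a b ∈ coarsen ψ 𝒞 (h + h') := by
  have hhom : ∀ g, ψ g = h → ∀ a ∈ 𝒜 g, f a b ∈ coarsen ψ 𝒞 (h + h') := by
    intro g hg a ha
    have : coarsen ψ ℬ h' ≤ (coarsen ψ 𝒞 (h + h')).comap (f a) := by
      refine (coarsen_le_iff ψ).2 fun g' hg' b hb => ?_
      exact mem_coarsen_of_mem ψ (hf ha hb) (by rw [map_add, hg, hg'])
    exact this hb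
  have : coarsen ψ 𝒜 h ≤ (coarsen ψ 𝒞 (h + h')).comap (f.flip b) :=
    (coarsen_le_iff ψ).2 fun g hg a ha => hhom g hg a ha
  exact this ha

variable {R : Type} [CommRing R] [Module R M]

theorem IsGradedModule.coarsen {𝒜 : G → AddSubgroup R} {ℳ : G → AddSubgroup M}
    (hℳ : IsGradedModule 𝒜 ℳ) : IsGradedModule (coarsen ψ 𝒜) (coarsen ψ ℳ) := by
  classical
  exact ⟨map₂_mem_coarsen ψ (smulAddHom R M) hℳ.1, isInternal_coarsen ψ hℳ.2⟩

end Coarsen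

section Quotient

variable {ι R M : Type*} [DecidableEq ι] [Ring R] [AddCommGroup M] [Module R M]

theorem isInternal_map_mkQ {ℳ : ι → AddSubgroup M} (hℳ : IsInternal ℳ) {W : Submodule R M}
    (hW : W.toAddSubgroup ≤ ⨆ i, W.toAddSubgroup ⊓ ℳ i) :
    IsInternal fun i => (ℳ i).map W.mkQ.toAddMonoidHom := by
  refine isInternal_addSubgroup_of_iSupIndep_of_iSup_eq_top (fun i => ?_) ?_
  · rw [AddSubgroup.disjoint_def]
    intro x hx hx'
    obtain ⟨a, ha, rfl⟩ := AddSubgroup.mem_map.1 hx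
    simp_rw [← AddSubgroup.map_iSup] at hx'
    obtain ⟨b, hb, hab⟩ := AddSubgroup.mem_map.1 hx'
    have hsub : a - b ∈ W := (Submodule.Quotient.eq W).1 hab.symm
    -- `a` and `b` differ by an element of `W`, whose degree-`i` part `w` must then equal `a`.
    rw [iSup_split_single _ i] at hW
    obtain ⟨w, hw, w', hw', hww'⟩ := AddSubgroup.mem_sup.1 (hW hsub)
    rw [AddSubgroup.mem_inf] at hw
    have hle : ⨆ (j) (_ : j ≠ i), W.toAddSubgroup ⊓ ℳ j ≤ ⨆ (j) (_ : j ≠ i), ℳ j :=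
      iSup₂_mono fun _ _ => inf_le_right
    have hdisj : a - w ∈ ℳ i ⊓ ⨆ (j) (_ : j ≠ i), ℳ j := by
      refine AddSubgroup.mem_inf.2 ⟨sub_mem ha hw.2, ?_⟩
      have hab' : a = b + (w + w') := sub_eq_iff_eq_add'.1 hww'.symm
      rw [hab', add_comm w, ← add_assoc, add_sub_cancel_right]
      exact add_mem hb (hle hw')
    rw [(hℳ.addSubgroup_iSupIndep i).eq_bot, AddSubgroup.mem_bot, sub_eq_zero] at hdisj
    exact (Submodule.Quotient.mk_eq_zero W).2 (hdisj ▸ hw.1)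
  · rw [← AddSubgroup.map_iSup, hℳ.addSubgroup_iSup_eq_top_s6,
      AddSubgroup.map_top_of_surjective _ W.mkQ_surjective]

end Quotient

section HomogeneousCore

variable {ι R M : Type*} [Ring R] [AddCommGroup M] [Module R M] {ℳ : ι → AddSubgroup M}

variable (ℳ) in
def homogeneousCore (U : Submodule R M) : Submodule R M :=
  Submodule.span R (⋃ i, (U : Set M) ∩ ℳ i)

theorem homogeneousCore_le (U : Submodule R M) : homogeneousCore ℳ U ≤ U :=
  Submodule.span_le.2 (Set.iUnion_subset fun _ => Set.inter_subset_left)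

theorem mem_homogeneousCore {U : Submodule R M} {i : ι} {m : M} (hmU : m ∈ U) (hm : m ∈ ℳ i) :
    m ∈ homogeneousCore ℳ U :=
  Submodule.subset_span (Set.mem_iUnion.2 ⟨i, hmU, hm⟩)

theorem homogeneousCore_mono : Monotone (homogeneousCore (R := R) ℳ) :=
  fun _ _ hUV => Submodule.span_mono (Set.iUnion_mono fun _ => Set.inter_subset_inter_left _ hUV)

theorem smul_mem_iSup_inf [Add ι] {𝒜 : ι → AddSubgroup R} (h𝒜 : ⨆ i, 𝒜 i = ⊤)
    (hsmul : ∀ {i j : ι} {r : R} {m : M}, r ∈ 𝒜 i → m ∈ ℳ j → r • m ∈ ℳ (i + j))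
    (U : Submodule R M) (r : R) {m : M} (hm : m ∈ ⨆ i, U.toAddSubgroup ⊓ ℳ i) :
    r • m ∈ ⨆ i, U.toAddSubgroup ⊓ ℳ i := by
  have hr : r ∈ ⨆ i, 𝒜 i := h𝒜 ▸ AddSubgroup.mem_top r
  refine AddSubgroup.iSup_induction 𝒜 (C := fun r => r • m ∈ ⨆ i, U.toAddSubgroup ⊓ ℳ i) hr
    (fun i r hr => ?_) (by simp) (fun r s hr hs => by simpa [add_smul] using add_mem hr hs)
  refine AddSubgroup.iSup_induction _ (C := fun m => r • m ∈ ⨆ i, U.toAddSubgroup ⊓ ℳ i) hm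
    (fun j m hm => ?_) (by simp) (fun m n hm hn => by simpa [smul_add] using add_mem hm hn)
  rw [AddSubgroup.mem_inf] at hm
  exact AddSubgroup.mem_iSup_of_mem (i + j)
    (AddSubgroup.mem_inf.2 ⟨U.smul_mem r hm.1, hsmul hr hm.2⟩)

theorem homogeneousCore_le_iSup_inf [Add ι] {𝒜 : ι → AddSubgroup R} (h𝒜 : ⨆ i, 𝒜 i = ⊤)
    (hsmul : ∀ {i j : ι} {r : R} {m : M}, r ∈ 𝒜 i → m ∈ ℳ j → r • m ∈ ℳ (i + j))
    (U : Submodule R M) :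
    (homogeneousCore ℳ U).toAddSubgroup ≤ ⨆ i, (homogeneousCore ℳ U).toAddSubgroup ⊓ ℳ i := by
  have hU : (homogeneousCore ℳ U).toAddSubgroup ≤ ⨆ i, U.toAddSubgroup ⊓ ℳ i := by
    intro m hm
    induction hm using Submodule.span_induction with
    | mem m hm =>
      obtain ⟨i, hmU, hmi⟩ := Set.mem_iUnion.1 hm
      exact AddSubgroup.mem_iSup_of_mem i (AddSubgroup.mem_inf.2 ⟨hmU, hmi⟩)
    | zero => exact zero_mem _
    | add m n _ _ hm hn => exact add_mem hm hn
    | smul r m _ hm => exact smul_mem_iSup_inf h𝒜 hsmul U r hm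
  refine hU.trans (iSup_mono fun i m hm => ?_)
  rw [AddSubgroup.mem_inf] at hm ⊢
  exact ⟨mem_homogeneousCore hm.1 hm.2, hm.2⟩

theorem exists_mem_homogeneousCore (hℳ : ⨆ i, ℳ i = ⊤) {U : ℕ → Submodule R M}
    (hU : Monotone U) (hcover : ∀ m, ∃ n, m ∈ U n) (m : M) :
    ∃ n, m ∈ homogeneousCore ℳ (U n) := by
  refine AddSubgroup.iSup_induction ℳ (C := fun m => ∃ n, m ∈ homogeneousCore ℳ (U n))
    (hℳ ▸ AddSubgroup.mem_top m) (fun i m hm => ?_) ⟨0, zero_mem _⟩ ?_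
  · obtain ⟨n, hn⟩ := hcover m
    exact ⟨n, mem_homogeneousCore hn hm⟩
  · rintro m m' ⟨n, hn⟩ ⟨n', hn'⟩
    have hmono : Monotone fun n => homogeneousCore ℳ (U n) := homogeneousCore_mono.comp hU
    exact ⟨max n n', add_mem (hmono (le_max_left n n') hn) (hmono (le_max_right n n') hn')⟩

end HomogeneousCore

noncomputable def DirectSum.linearMapOfFinite {ι R M : Type*} {N : ι → Type*} [Semiring R]
    [AddCommMonoid M] [Module R M] [∀ i, AddCommMonoid (N i)] [∀ i, Module R (N i)]
    (f : ∀ i, M →ₗ[R] N i) (hf : ∀ m, {i | f i m ≠ 0}.Finite) : M →ₗ[R] ⨁ i, N i where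
  toFun m := (⟨fun i => f i m, Trunc.mk ⟨(hf m).toFinset.val, fun _ =>
    or_iff_not_imp_right.2 fun hi => (hf m).mem_toFinset.2 hi⟩⟩ : Π₀ i, N i)
  map_add' m m' := DFinsupp.ext fun i => map_add (f i) m m'
  map_smul' r m := DFinsupp.ext fun i => map_smul (f i) r m

def CoveringChainsStabilize (R M : Type*) [Semiring R] [AddCommMonoid M] [Module R M] : Prop :=
  ∀ U : ℕ → Submodule R M, Monotone U → (∀ m, ∃ n, m ∈ U n) → ∃ n, U n = ⊤

section Small

variable {G R M : Type} [AddCommGroup G] [CommRing R] [AddCommGroup M] [Module R M]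

theorem IsGradedModule.map_mkQ {𝒜 : G → AddSubgroup R} {ℳ : G → AddSubgroup M}
    (hℳ : IsGradedModule 𝒜 ℳ) {W : Submodule R M}
    (hW : W.toAddSubgroup ≤ ⨆ g, W.toAddSubgroup ⊓ ℳ g) :
    IsGradedModule 𝒜 fun g => (ℳ g).map W.mkQ.toAddMonoidHom := by
  classical
  refine ⟨fun {_ _ r _} hr hm => ?_, isInternal_map_mkQ hℳ.2 hW⟩
  obtain ⟨x, hx, rfl⟩ := AddSubgroup.mem_map.1 hm
  exact ⟨r • x, hℳ.1 hr hx, W.mkQ.map_smul r x⟩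

theorem isSmall_of_coveringChainsStabilize (hM : CoveringChainsStabilize R M)
    (𝒜 : G → AddSubgroup R) (ℳ : G → AddSubgroup M) : IsSmall 𝒜 ℳ := by
  classical
  intro ι N _ _ 𝒩 _ f _
  by_contra hfin
  have hT : {i | ∃ m, f m i ≠ 0}.Infinite := fun hT =>
    hfin ⟨hT.toFinset, fun m i hi => by_contra fun h => hi (hT.mem_toFinset.2 ⟨m, h⟩)⟩
  let e := hT.natEmbedding
  have he : Function.Injective fun k => (e k : ι) := Subtype.val_injective.comp e.injective
  let U (n : ℕ) : Submodule R M :=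
    { carrier := {m | ∀ k, n ≤ k → f m (e k) = 0}
      zero_mem' := fun k _ => by simp
      add_mem' := fun hm hm' k hk => by simp [hm k hk, hm' k hk]
      smul_mem' := fun r m hm k hk => by rw [map_smul, DFinsupp.smul_apply, hm k hk, smul_zero] }
  have hcover (m : M) : ∃ n, m ∈ U n := by
    have : ∀ᶠ k in Filter.atTop, f m (e k) = 0 := by
      rw [← Nat.cofinite_eq_atTop]
      simpa using he.tendsto_cofinite.eventually (f m).support.finite_toSet.eventually_cofinite_notMem
    exact Filter.eventually_atTop.1 this
  obtain ⟨n, hn⟩ := hM U (fun n n' hnn' m hm k hk => hm k (hnn'.trans hk)) hcover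
  obtain ⟨m, hm⟩ := (e n).2
  exact hm ((hn ▸ Submodule.mem_top : m ∈ U n) n le_rfl)

theorem coveringChainsStabilize_of_isSmall {𝒜 : G → AddSubgroup R} (h𝒜 : ⨆ g, 𝒜 g = ⊤)
    {ℳ : G → AddSubgroup M} (hℳ : IsGradedModule 𝒜 ℳ) (hsmall : IsSmall 𝒜 ℳ) :
    CoveringChainsStabilize R M := by
  classical
  intro U hU hcover
  let W (n : ℕ) := homogeneousCore ℳ (U n)
  have hW (m : M) : ∃ n, m ∈ W n :=
    exists_mem_homogeneousCore hℳ.2.addSubgroup_iSup_eq_top_s6 hU hcover m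
  have hfin (m : M) : {n | (W n).mkQ m ≠ 0}.Finite := by
    obtain ⟨N, hN⟩ := hW m
    refine (Set.finite_Iio N).subset fun n hn => ?_
    by_contra hNn
    exact hn ((Submodule.Quotient.mk_eq_zero _).2
      (homogeneousCore_mono (hU (not_lt.1 hNn)) hN))
  let f := DirectSum.linearMapOfFinite (fun n => (W n).mkQ) hfin
  obtain ⟨s, hs⟩ := hsmall ℕ (fun n => M ⧸ W n) (fun n g => (ℳ g).map (W n).mkQ.toAddMonoidHom)
    (fun n => hℳ.map_mkQ (homogeneousCore_le_iSup_inf h𝒜 hℳ.1 _))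
    f (fun g m hm n => AddSubgroup.mem_map_of_mem _ hm)
  obtain ⟨n, hn⟩ := Infinite.exists_notMem_finset s
  exact ⟨n, eq_top_iff.2 fun m _ =>
    homogeneousCore_le _ ((Submodule.Quotient.mk_eq_zero _).1 (hs m n hn))⟩

theorem isSmall_iff_coveringChainsStabilize {𝒜 : G → AddSubgroup R} (h𝒜 : ⨆ g, 𝒜 g = ⊤)
    {ℳ : G → AddSubgroup M} (hℳ : IsGradedModule 𝒜 ℳ) :
    IsSmall 𝒜 ℳ ↔ CoveringChainsStabilize R M :=
  ⟨coveringChainsStabilize_of_isSmall h𝒜 hℳ, fun hM => isSmall_of_coveringChainsStabilize hM 𝒜 ℳ⟩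

end Small

theorem small_iff_coarsening_small_general
    {G H R M : Type} [AddCommGroup G] [AddCommGroup H] [CommRing R]
    [AddCommGroup M] [Module R M]
    (ψ : G →+ H)
    (𝒜 : G → AddSubgroup R) (h𝒜 : IsGradedRing 𝒜)
    (ℳ : G → AddSubgroup M) (hℳ : IsGradedModule 𝒜 ℳ) :
    IsSmall 𝒜 ℳ ↔ IsSmall (coarsen ψ 𝒜) (coarsen ψ ℳ) := by
  classical
  have h𝒜top := h𝒜.2.2.addSubgroup_iSup_eq_top_s6
  rw [isSmall_iff_coveringChainsStabilize h𝒜top hℳ,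
    isSmall_iff_coveringChainsStabilize ((iSup_coarsen ψ 𝒜).trans h𝒜top) (hℳ.coarsen ψ)]

/-- **Statement 11** (Proposition 2.30 a)): `M` is a small `G`-graded `R`-module if and
only if `M_[ψ]` is a small `H`-graded `R_[ψ]`-module. -/
theorem small_iff_coarsening_small
    {G H R M : Type} [AddCommGroup G] [AddCommGroup H] [CommRing R]
    [AddCommGroup M] [Module R M]
    (ψ : G →+ H) (hψ : Function.Surjective ψ)
    (𝒜 : G → AddSubgroup R) (h𝒜 : IsGradedRing 𝒜)
    (ℳ : G → AddSubgroup M) (hℳ : IsGradedModule 𝒜 ℳ) :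
    IsSmall 𝒜 ℳ ↔ IsSmall (coarsen ψ 𝒜) (coarsen ψ ℳ) :=
  small_iff_coarsening_small_general ψ 𝒜 h𝒜 ℳ hℳ
end

section
/- Let G and H be additive commutative groups, ψ: G → H a surjective group homomorphism, A a commutative ring, and R the G-graded ring with R_0 = A and R_g = 0 for g ≠ 0 (so that R_[ψ] is the H-graded ring with (R_[ψ])_0 = A and (R_[ψ])_h = 0 for h ≠ 0). Then for every H-graded R_[ψ]-module M, the H-graded R_[ψ]-module (M^[ψ])_[ψ] is isomorphic to the direct sum M^(⊕ker(ψ)) of copies of M indexed by ker(ψ). -/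
/-!
Choose a set-theoretic section `s` of `ψ`. Every `g : G` is uniquely `k + s h` with `k ∈ ker ψ`
and `h = ψ g`, so `⨁_g M_{ψ g} ≅ ⨁_{k ∈ ker ψ} ⨁_h M_h ≅ ⨁_{k ∈ ker ψ} M`, the summand of index
`k + s h` going to `M_h` inside the `k`-th copy of `M`. The degree-`h` part of the coarsening is
the sum of the summands indexed by the fibre `ψ⁻¹(h) = ker ψ + s h`, so it goes to `⨁_k M_h`,
the degree-`h` part of `M^(⊕ ker ψ)`.
-/

open DirectSum

namespace AddMonoidHom

variable {G H : Type*} [AddCommGroup G] [AddCommGroup H] (ψ : G →+ H) {s : H → G}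

theorem map_ker_add_of_rightInverse (hs : Function.RightInverse s ψ) (k : ψ.ker) (h : H) :
    ψ (k + s h) = h := by
  rw [map_add, ψ.mem_ker.1 k.2, hs h, zero_add]

def equivSigmaKerOfRightInverse (hs : Function.RightInverse s ψ) : G ≃ Σ _ : ψ.ker, H where
  toFun g := ⟨⟨g - s (ψ g), by simp [hs (ψ g)]⟩, ψ g⟩
  invFun p := p.1 + s p.2
  left_inv g := sub_add_cancel g _
  right_inv := fun ⟨k, h⟩ => by
    ext <;> simp [ψ.map_ker_add_of_rightInverse hs]

theorem iSup_preimage_singleton_eq_iSup_ker {α : Type*} [CompleteLattice α]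
    (hs : Function.RightInverse s ψ) (f : G → α) (h : H) :
    ⨆ g ∈ ψ ⁻¹' {h}, f g = ⨆ k : ψ.ker, f (k + s h) := by
  apply le_antisymm
  · refine iSup₂_le fun g hg => ?_
    have hk : g - s h ∈ ψ.ker := by simp_all [hs h]
    simpa using le_iSup (fun k : ψ.ker => f (k + s h)) ⟨g - s h, hk⟩
  · exact iSup_le fun k =>
      le_iSup₂_of_le (f := fun g _ => f g) (k + s h) (ψ.map_ker_add_of_rightInverse hs k h) le_rfl

end AddMonoidHom

namespace DirectSum

variable {R ι : Type*} [Semiring R] [DecidableEq ι]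

theorem mapRange_linearEquiv_lof {M N : ι → Type*} [∀ i, AddCommMonoid (M i)]
    [∀ i, AddCommMonoid (N i)] [∀ i, Module R (M i)] [∀ i, Module R (N i)]
    (e : ∀ i, M i ≃ₗ[R] N i) (i : ι) (x : M i) :
    DFinsupp.mapRange.linearEquiv e (lof R ι M i x) = lof R ι N i (e i x) :=
  DFinsupp.mapRange_single (hf := fun i => (e i).map_zero)

theorem sigmaLcurryEquiv_lof {α : ι → Type*} [∀ i, DecidableEq (α i)] {δ : ∀ i, α i → Type*}
    [∀ i j, AddCommMonoid (δ i j)] [∀ i j, Module R (δ i j)] (p : Σ i, α i) (x : δ p.1 p.2) :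
    sigmaLcurryEquiv R (lof R _ (fun p => δ p.1 p.2) p x) =
      lof R ι _ p.1 (lof R (α p.1) _ p.2 x) :=
  sigmaCurry_of p x

end DirectSum

theorem directSumGrading_eq_iSup_map_of {G ι : Type} [AddCommGroup G] [DecidableEq ι]
    {M : ι → Type} [∀ i, AddCommGroup (M i)] (ℳ : ∀ i, G → AddSubgroup (M i)) (g : G) :
    directSumGrading ℳ g = ⨆ i, (ℳ i g).map (DirectSum.of M i) := by
  classical
  apply le_antisymm
  · intro x hx
    rw [← DirectSum.sum_support_of x]
    exact sum_mem fun i _ => AddSubgroup.mem_iSup_of_mem i ⟨x i, hx i, rfl⟩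
  · refine iSup_le fun i => AddSubgroup.map_le_iff_le_comap.2 fun m hm j => ?_
    by_cases hij : i = j
    · subst hij
      simpa using hm
    · rw [DirectSum.of_eq_of_ne _ _ _ (Ne.symm hij)]
      exact zero_mem _

namespace AddMonoidHom

variable {G H A M : Type*} [AddCommGroup G] [AddCommGroup H] [DecidableEq G] [DecidableEq H]
  [Semiring A] [AddCommMonoid M] [Module A M] (ψ : G →+ H) {s : H → G}
  (hs : Function.RightInverse s ψ) (𝒩 : H → Submodule A M) [Decomposition 𝒩]

noncomputable def refinementEquivDirectSumKer : (⨁ g, 𝒩 (ψ g)) ≃ₗ[A] ⨁ _ : ψ.ker, M :=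
  lequivCongrLeft A (ψ.equivSigmaKerOfRightInverse hs) ≪≫ₗ
    DFinsupp.mapRange.linearEquiv (fun p =>
      LinearEquiv.ofEq _ _ (congrArg 𝒩 (ψ.map_ker_add_of_rightInverse hs p.1 p.2))) ≪≫ₗ
    sigmaLcurryEquiv A (δ := fun _ h => 𝒩 h) ≪≫ₗ
    DFinsupp.mapRange.linearEquiv (fun _ => (decomposeLinearEquiv 𝒩).symm)

/- Stated at the index `(equivSigmaKerOfRightInverse hs).symm p` rather than at the defeq
`p.1 + s p.2`: only then is the type of `x` syntactically the one `lequivCongrLeft_lof` produces,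
which the later rewrites need. -/
theorem refinementEquivDirectSumKer_lof (p : Σ _ : ψ.ker, H)
    (x : 𝒩 (ψ ((ψ.equivSigmaKerOfRightInverse hs).symm p))) :
    ψ.refinementEquivDirectSumKer hs 𝒩
        (lof A G (fun g => 𝒩 (ψ g)) ((ψ.equivSigmaKerOfRightInverse hs).symm p) x) =
      lof A ψ.ker (fun _ => M) p.1 x := by
  rw [refinementEquivDirectSumKer, LinearEquiv.trans_apply, LinearEquiv.trans_apply,
    LinearEquiv.trans_apply, lequivCongrLeft_lof A (M := fun g => 𝒩 (ψ g)) rfl x x rfl,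
    mapRange_linearEquiv_lof, sigmaLcurryEquiv_lof, mapRange_linearEquiv_lof,
    decomposeLinearEquiv_symm_lof, LinearEquiv.coe_ofEq_apply]

theorem map_refinementEquivDirectSumKer_range_lof (k : ψ.ker) (h : H) :
    (LinearMap.range (lof A G (fun g => 𝒩 (ψ g)) (k + s h))).map
        (ψ.refinementEquivDirectSumKer hs 𝒩).toLinearMap =
      (𝒩 h).map (lof A ψ.ker (fun _ => M) k) := by
  have hcomp : (ψ.refinementEquivDirectSumKer hs 𝒩).toLinearMap ∘ₗ lof A G _ (k + s h) =
      lof A ψ.ker (fun _ => M) k ∘ₗ (𝒩 _).subtype :=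
    LinearMap.ext (ψ.refinementEquivDirectSumKer_lof hs 𝒩 ⟨k, h⟩)
  rw [← LinearMap.range_comp, hcomp, LinearMap.range_comp, Submodule.range_subtype,
    ψ.map_ker_add_of_rightInverse hs]

end AddMonoidHom

theorem refinement_coarsening_eq_directSum_over_kernel_general
    {G H A : Type} [AddCommGroup G] [AddCommGroup H] [DecidableEq G]
    [CommRing A]
    (ψ : G →+ H) (hψ : Function.Surjective ψ)
    (𝒜 : G → AddSubgroup A)
    (M : Type) [AddCommGroup M] [Module A M]
    (𝒩 : H → Submodule A M)
    (hmod : IsGradedModule (coarsen ψ 𝒜) (fun h => (𝒩 h).toAddSubgroup)) :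
    ∃ e : (⨁ g : G, 𝒩 (ψ g)) ≃ₗ[A] (⨁ (_ : ψ.ker), M),
      ∀ h : H,
        AddSubgroup.map e.toLinearMap.toAddMonoidHom
            (coarsen ψ
              (fun g : G =>
                ((DirectSum.lof A G (fun g' : G => 𝒩 (ψ g')) g).range.toAddSubgroup)) h)
          = directSumGrading (fun (_ : ψ.ker) (h' : H) => (𝒩 h').toAddSubgroup) h := by
  let := Classical.decEq H
  let : Decomposition 𝒩 := IsInternal.chooseDecomposition 𝒩 hmod.2
  have hs := Function.rightInverse_surjInv hψ
  refine ⟨ψ.refinementEquivDirectSumKer hs 𝒩, fun h => ?_⟩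
  rw [directSumGrading_eq_iSup_map_of, coarsen, ψ.iSup_preimage_singleton_eq_iSup_ker hs,
    AddSubgroup.map_iSup]
  exact iSup_congr fun k =>
    congrArg Submodule.toAddSubgroup (ψ.map_refinementEquivDirectSumKer_range_lof hs 𝒩 k h)

/-- **Statement 19** (Example 1.20 C)): let `R` be the `G`-graded ring with `R_0 = A` and
`R_g = 0` for `g ≠ 0` (encoded by the grading `𝒜` on the ring `A`), so that `R_[ψ]` is the
`H`-graded ring concentrated in degree `0`. For every `H`-graded `R_[ψ]`-module `M` (with
grading `𝒩`; its components are automatically `A`-submodules), the `H`-graded module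
`(M^[ψ])_[ψ]` — the refinement `M^[ψ] = ⨁_{g : G} M_{ψ g}` together with its `ψ`-coarsened
grading — is isomorphic to `M^(⊕ ker ψ)`, the direct sum of copies of `M` indexed by
`ker ψ` with its componentwise grading. -/
theorem refinement_coarsening_eq_directSum_over_kernel
    {G H A : Type} [AddCommGroup G] [AddCommGroup H] [DecidableEq G] [DecidableEq H]
    [CommRing A]
    (ψ : G →+ H) (hψ : Function.Surjective ψ)
    (𝒜 : G → AddSubgroup A) (h𝒜0 : 𝒜 0 = ⊤) (h𝒜ne : ∀ g : G, g ≠ 0 → 𝒜 g = ⊥)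
    (M : Type) [AddCommGroup M] [Module A M]
    (𝒩 : H → Submodule A M)
    (hmod : IsGradedModule (coarsen ψ 𝒜) (fun h => (𝒩 h).toAddSubgroup)) :
    ∃ e : (⨁ g : G, 𝒩 (ψ g)) ≃ₗ[A] (⨁ (_ : ψ.ker), M),
      ∀ h : H,
        AddSubgroup.map e.toLinearMap.toAddMonoidHom
            (coarsen ψ
              (fun g : G =>
                ((DirectSum.lof A G (fun g' : G => 𝒩 (ψ g')) g).range.toAddSubgroup)) h)
          = directSumGrading (fun (_ : ψ.ker) (h' : H) => (𝒩 h').toAddSubgroup) h :=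
  refinement_coarsening_eq_directSum_over_kernel_general ψ hψ 𝒜 M 𝒩 hmod
end
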